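/- In the finite growth model with no white vertices, for an initially green vertex x: x becomes red exactly at time τ*, the maximal τ-value of an edge of the stopped-invasion tree T(x); moreover C_g(x), the green cluster of x just before it becomes red, equals the vertex set of T_1*(x), the component of x in T(x) after deleting the edge e* that attains τ*. -/

import Mathlib

/-!
Write `W k` for the vertex set of the invasion tree after `k` steps. Every edge leaving `W k` has
`τ`-value at least `τ (E k)`, while an edge open at time `t` has `τ`-value at most `t`; hence
before time `τ (E k)` no open path leaves `W k`, and since `W k` (for `k < m`) contains no
initially red vertex, it stays green on `[0, τ (E k))`. In particular the tree end of `E k` is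
green on that interval, so `E k` is open from time `τ (E k)` on. At time `τ*` all tree edges are
open and join `x` to `R`, so `x` is red, while before `τ*` it is protected by `W N`. The same
boundary argument confines `C_g(x)` to `W N`; conversely, just before `τ*` all of `W N` is green
and joined by the open edges `E k`, `k < N`. Finally `W N` is the component of `x` in
`T(x) - e*`: a later tree edge leaving `W N` would have `τ`-value at least `τ*`, hence equal to it.
-/

open MeasureTheory ProbabilityTheory Set
open scoped ENNReal

namespace RandomSpatialGrowth

/-- The three possible colours of a vertex of the growth model. -/
inductive Color : Type
  | white : Color
  | red : Color
  | green : Color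
  deriving DecidableEq

instance : MeasurableSpace Color := ⊤

/-- A numerical encoding of the colours (used only to state independence). -/
def Color.code : Color → ℝ
  | Color.white => 0
  | Color.red => 1
  | Color.green => 2

variable {V : Type*}

/-- Edge `e` has at least one green end-vertex at time `t`. -/
def greenTouch (col : ℝ → V → Color) (t : ℝ) (e : Sym2 V) : Prop :=
  ∃ v ∈ e, col t v = Color.green

/-- `u` and `v` are joined by a path of edges of the arena `A` that are all open at time `t`. -/
def openConn {G : SimpleGraph V} (A : G.Subgraph) (opn : ℝ → Sym2 V → Prop) (t : ℝ)
    (u v : V) : Prop :=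
  Relation.ReflTransGen (fun a b => A.Adj a b ∧ opn t s(a, b)) u v

/-- A time evolution of the growth process on the arena (subgraph) `A` of `G`, with initial
colours `c` and opening times `τ`.  `opn t e` says that the edge `e` is open at time `t` and
`col t v` is the colour of the vertex `v` at time `t`.  The axioms characterize the dynamics:
all edges are initially closed and an edge of the arena is open at time `t` iff the set of
earlier (nonnegative) times at which it had at least one green end-vertex has Lebesgue measure
at least `τ e`; instantaneously upon openings, white vertices touched by green become green and
green clusters touching red become red, so that at any time a vertex is red iff it is joined by
open edges to an initially red vertex, and it is white iff it is initially white and no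
incident edge has opened. -/
structure Evolution {G : SimpleGraph V} (A : G.Subgraph) (c : V → Color)
    (τ : Sym2 V → ℝ) where
  opn : ℝ → Sym2 V → Prop
  col : ℝ → V → Color
  open_iff : ∀ t, 0 ≤ t → ∀ e ∈ A.edgeSet,
    (opn t e ↔ ENNReal.ofReal (τ e) ≤ volume {s : ℝ | 0 ≤ s ∧ s < t ∧ greenTouch col s e})
  closed_outside : ∀ (t : ℝ) (e : Sym2 V), e ∉ A.edgeSet → ¬ opn t e
  red_iff : ∀ t, 0 ≤ t → ∀ v ∈ A.verts,
    (col t v = Color.red ↔ ∃ w, openConn A opn t v w ∧ c w = Color.red)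
  white_iff : ∀ t, 0 ≤ t → ∀ v ∈ A.verts,
    (col t v = Color.white ↔ c v = Color.white ∧ ∀ w, A.Adj v w → ¬ opn t s(v, w))

/-- `u` and `v` belong to the same green cluster at time `t`:  they are joined by a path of
open edges all of whose vertices are green at time `t`. -/
def greenConn {G : SimpleGraph V} (A : G.Subgraph) (opn : ℝ → Sym2 V → Prop)
    (col : ℝ → V → Color) (t : ℝ) (u v : V) : Prop :=
  Relation.ReflTransGen
    (fun a b => A.Adj a b ∧ opn t s(a, b) ∧ col t a = Color.green ∧ col t b = Color.green) u v

/-- `u` and `v` belong to the same red cluster at time `t`:  they are joined by a path of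
open edges all of whose vertices are red at time `t`. -/
def redConn {G : SimpleGraph V} (A : G.Subgraph) (opn : ℝ → Sym2 V → Prop)
    (col : ℝ → V → Color) (t : ℝ) (u v : V) : Prop :=
  Relation.ReflTransGen
    (fun a b => A.Adj a b ∧ opn t s(a, b) ∧ col t a = Color.red ∧ col t b = Color.red) u v

/-- The green cluster of `v` just before it becomes red: the union over all times `t ≥ 0`
of the green cluster of `v` at time `t`. -/
def Cg {G : SimpleGraph V} {A : G.Subgraph} {c : V → Color} {τ : Sym2 V → ℝ}
    (ev : Evolution A c τ) (v : V) : Set V :=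
  {x | ∃ t, 0 ≤ t ∧ ev.col t v = Color.green ∧ greenConn A ev.opn ev.col t v x}

/-- The initially green vertex `v` becomes red due to the initially red vertex `w` :
at some time, `v` is red and its red cluster contains `w`. -/
def dueTo {G : SimpleGraph V} {A : G.Subgraph} {c : V → Color} {τ : Sym2 V → ℝ}
    (ev : Evolution A c τ) (v w : V) : Prop :=
  c v = Color.green ∧ c w = Color.red ∧
    ∃ t, 0 ≤ t ∧ ev.col t v = Color.red ∧ redConn A ev.opn ev.col t v w

/-- The set `D(w)` of initially green vertices that become red due to `w`. -/
def Dset {G : SimpleGraph V} {A : G.Subgraph} {c : V → Color} {τ : Sym2 V → ℝ}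
    (ev : Evolution A c τ) (w : V) : Set V :=
  {v | dueTo ev v w}

/-- The vertex `x` becomes red exactly at time `t₀`. -/
def becomesRedAt {G : SimpleGraph V} {A : G.Subgraph} {c : V → Color} {τ : Sym2 V → ℝ}
    (ev : Evolution A c τ) (x : V) (t₀ : ℝ) : Prop :=
  0 ≤ t₀ ∧ ev.col t₀ x = Color.red ∧ ∀ s, 0 ≤ s → s < t₀ → ev.col s x ≠ Color.red

/-- The vertex set of the invasion tree grown from `x` after `n` steps, when the `k`-th
invaded edge is `E k`. -/
def treeVerts (x : V) (E : ℕ → Sym2 V) (n : ℕ) : Set V :=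
  {x} ∪ ⋃ k < n, {v : V | v ∈ E k}

/-- Step `n` of the invasion procedure started at `x` is correct :  among all edges of `G`
having exactly one end-vertex in the current tree, `E n` is the one of minimal `τ`-value. -/
def InvStep (G : SimpleGraph V) (τ : Sym2 V → ℝ) (x : V) (E : ℕ → Sym2 V) (n : ℕ) : Prop :=
  E n ∈ G.edgeSet ∧ (∃! v, v ∈ E n ∧ v ∈ treeVerts x E n) ∧
    ∀ e' ∈ G.edgeSet, (∃! v, v ∈ e' ∧ v ∈ treeVerts x E n) → τ (E n) ≤ τ e'

/-- The edges `E 0, …, E (m-1)` form the stopped invasion procedure from `x` :  at each step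
the external edge of minimal `τ`-value is added to the tree, the procedure stops as soon as an
initially red vertex is added, and `R` is that first (and only) invaded initially red
vertex, added at the last step. -/
def StoppedInvasion (G : SimpleGraph V) (c : V → Color) (τ : Sym2 V → ℝ) (x : V)
    (E : ℕ → Sym2 V) (m : ℕ) (R : V) : Prop :=
  0 < m ∧ (∀ n < m, InvStep G τ x E n) ∧
  (∀ n < m, ∀ v ∈ E n, v ∉ treeVerts x E n → (c v = Color.red ↔ n = m - 1)) ∧
  R ∈ E (m - 1) ∧ R ∉ treeVerts x E (m - 1) ∧ c R = Color.red

theorem _root_.Relation.ReflTransGen.mem_of_closed {α : Type*} {r : α → α → Prop} {S : Set α}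
    (hS : ∀ a b, r a b → a ∈ S → b ∈ S) {a b : α} (hab : Relation.ReflTransGen r a b)
    (ha : a ∈ S) : b ∈ S := by
  induction hab with
  | refl => exact ha
  | tail _ hbc ih => exact hS _ _ hbc ih

theorem exists_nonneg_lt_of_forall_lt (f : ℕ → ℝ) {b : ℝ} (hb : 0 < b) {n : ℕ}
    (h : ∀ k < n, f k < b) : ∃ T, 0 ≤ T ∧ T < b ∧ ∀ k < n, f k ≤ T := by
  induction n with
  | zero => exact ⟨0, le_rfl, hb, by simp⟩
  | succ n ih =>
    obtain ⟨T, hT0, hTb, hT⟩ := ih fun k hk => h k (by omega)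
    refine ⟨max T (f n), le_max_of_le_left hT0, max_lt hTb (h n (by omega)), fun k hk => ?_⟩
    rcases Nat.lt_succ_iff_lt_or_eq.1 hk with hk | rfl
    · exact le_max_of_le_left (hT k hk)
    · exact le_max_right _ _

section InvasionTree

variable {G : SimpleGraph V} {τ : Sym2 V → ℝ} {x : V} {E : ℕ → Sym2 V}

theorem mem_treeVerts_self (n : ℕ) : x ∈ treeVerts x E n := Or.inl rfl

theorem mem_treeVerts_of_mem {j n : ℕ} (hjn : j < n) {v : V} (hv : v ∈ E j) :
    v ∈ treeVerts x E n :=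
  Or.inr (Set.mem_biUnion hjn hv)

theorem mem_treeVerts_zero {v : V} : v ∈ treeVerts x E 0 ↔ v = x := by
  simp [treeVerts]

theorem mem_treeVerts_succ {n : ℕ} {v : V} :
    v ∈ treeVerts x E (n + 1) ↔ v ∈ treeVerts x E n ∨ v ∈ E n := by
  simp only [treeVerts, Set.mem_union, Set.mem_singleton_iff, Set.mem_iUnion, Set.mem_ofPred_eq,
    exists_prop, Nat.lt_succ_iff_lt_or_eq, or_and_right, exists_or, exists_eq_left, or_assoc]

theorem reflTransGen_of_mem_treeVerts {r : V → V → Prop} {n : ℕ}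
    (hroot : ∀ j < n, ∃ u ∈ E j, u ∈ treeVerts x E j)
    (hr : ∀ j < n, ∀ a b, E j = s(a, b) → r a b) {y : V} (hy : y ∈ treeVerts x E n) :
    Relation.ReflTransGen r x y := by
  induction n generalizing y with
  | zero => rw [mem_treeVerts_zero.1 hy]
  | succ n ih =>
    have ih' {z : V} (hz : z ∈ treeVerts x E n) : Relation.ReflTransGen r x z :=
      ih (fun j hj => hroot j (by omega)) (fun j hj => hr j (by omega)) hz
    rcases mem_treeVerts_succ.1 hy with hy | hy
    · exact ih' hy
    obtain ⟨u, hu, huW⟩ := hroot n (by omega)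
    by_cases hyu : y = u
    · exact hyu ▸ ih' huW
    · exact (ih' huW).tail (hr n (by omega) u y ((Sym2.mem_and_mem_iff (Ne.symm hyu)).1 ⟨hu, hy⟩))

theorem InvStep.mem_edgeSet {n : ℕ} (h : InvStep G τ x E n) : E n ∈ G.edgeSet := h.1

theorem InvStep.exists_mem_treeVerts {n : ℕ} (h : InvStep G τ x E n) :
    ∃ u ∈ E n, u ∈ treeVerts x E n :=
  let ⟨u, hu, _⟩ := h.2.1
  ⟨u, hu⟩

theorem InvStep.adj_of_eq {n : ℕ} (h : InvStep G τ x E n) {a b : V} (hab : E n = s(a, b)) :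
    G.Adj a b := by
  rw [← SimpleGraph.mem_edgeSet, ← hab]
  exact h.mem_edgeSet

theorem InvStep.le_of_adj {n : ℕ} (h : InvStep G τ x E n) {a b : V}
    (ha : a ∈ treeVerts x E n) (hb : b ∉ treeVerts x E n) (hab : G.Adj a b) :
    τ (E n) ≤ τ s(a, b) := by
  refine h.2.2 s(a, b) hab ⟨a, ⟨Sym2.mem_mk_left a b, ha⟩, ?_⟩
  rintro z ⟨hz, hzW⟩
  rcases Sym2.mem_iff.1 hz with rfl | rfl
  · rfl
  · exact absurd hzW hb

theorem InvStep.ne_of_lt {j n : ℕ} (h : InvStep G τ x E n) (hjn : j < n) : E j ≠ E n := by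
  intro hE
  obtain ⟨u, -, huniq⟩ := h.2.1
  have hedge := h.mem_edgeSet
  induction hn : E n using Sym2.ind with
  | _ a b =>
    rw [hn] at hedge
    have hW : ∀ v ∈ s(a, b), v = u := fun v hv =>
      huniq v ⟨hn ▸ hv, mem_treeVerts_of_mem hjn (hE ▸ hn ▸ hv)⟩
    exact G.ne_of_adj hedge ((hW a (Sym2.mem_mk_left a b)).trans (hW b (Sym2.mem_mk_right a b)).symm)

end InvasionTree

namespace Evolution

variable {G : SimpleGraph V} {c : V → Color} {τ : Sym2 V → ℝ}
  (ev : Evolution (⊤ : G.Subgraph) c τ)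

theorem mem_edgeSet_of_opn {t : ℝ} {e : Sym2 V} (h : ev.opn t e) : e ∈ G.edgeSet :=
  by_contra fun he => ev.closed_outside t e he h

theorem le_of_opn {t : ℝ} (ht : 0 ≤ t) {e : Sym2 V} (h : ev.opn t e) : τ e ≤ t := by
  have hvol := (ev.open_iff t ht e (ev.mem_edgeSet_of_opn h)).1 h
  have hIco : volume {s : ℝ | 0 ≤ s ∧ s < t ∧ greenTouch ev.col s e} ≤ volume (Ico 0 t) :=
    measure_mono fun s hs => ⟨hs.1, hs.2.1⟩
  rw [Real.volume_Ico, sub_zero] at hIco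
  exact (ENNReal.ofReal_le_ofReal_iff ht).1 (hvol.trans hIco)

theorem opn_of_forall_green {e : Sym2 V} (he : e ∈ G.edgeSet) {u : V} (hu : u ∈ e)
    (hgreen : ∀ s, 0 ≤ s → s < τ e → ev.col s u = Color.green) {t : ℝ} (ht : 0 ≤ t)
    (hte : τ e ≤ t) : ev.opn t e := by
  refine (ev.open_iff t ht e he).2 ?_
  rw [← sub_zero (τ e), ← Real.volume_Ico]
  exact measure_mono fun s hs => ⟨hs.1, hs.2.trans_le hte, u, hu, hgreen s hs.1 hs.2⟩

theorem col_eq_green_iff (hnw : ∀ v, c v ≠ Color.white) {t : ℝ} (ht : 0 ≤ t) (v : V) :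
    ev.col t v = Color.green ↔ ev.col t v ≠ Color.red := by
  have hwhite : ev.col t v ≠ Color.white := fun h =>
    hnw v ((ev.white_iff t ht v (by simp)).1 h).1
  cases h : ev.col t v <;> simp_all

theorem opn_mono {t t' : ℝ} (ht : 0 ≤ t) (htt' : t ≤ t') {e : Sym2 V} (h : ev.opn t e) :
    ev.opn t' e := by
  have he := ev.mem_edgeSet_of_opn h
  refine (ev.open_iff t' (ht.trans htt') e he).2 ((ev.open_iff t ht e he).1 h |>.trans ?_)
  exact measure_mono fun s hs => ⟨hs.1, hs.2.1.trans_le htt', hs.2.2⟩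

theorem col_eq_red_mono {t t' : ℝ} (ht : 0 ≤ t) (htt' : t ≤ t') {v : V}
    (h : ev.col t v = Color.red) : ev.col t' v = Color.red := by
  obtain ⟨w, hvw, hw⟩ := (ev.red_iff t ht v (by simp)).1 h
  exact (ev.red_iff t' (ht.trans htt') v (by simp)).2
    ⟨w, Relation.ReflTransGen.mono (fun a b (hab : _ ∧ _) => ⟨hab.1, ev.opn_mono ht htt' hab.2⟩)
      _ _ hvw, hw⟩

theorem mem_of_openConn {S : Set V} {t : ℝ} (ht : 0 ≤ t)
    (hS : ∀ a ∈ S, ∀ b ∉ S, G.Adj a b → t < τ s(a, b)) {v y : V}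
    (hvy : openConn (⊤ : G.Subgraph) ev.opn t v y) (hv : v ∈ S) : y ∈ S := by
  refine hvy.mem_of_closed (fun a b hab ha => ?_) hv
  by_contra hb
  exact (hS a ha b hb (SimpleGraph.Subgraph.top_adj.1 hab.1)).not_ge (ev.le_of_opn ht hab.2)

theorem col_ne_red_of_forall_lt {S : Set V} {t : ℝ} (ht : 0 ≤ t)
    (hS : ∀ a ∈ S, ∀ b ∉ S, G.Adj a b → t < τ s(a, b)) (hSred : ∀ w ∈ S, c w ≠ Color.red)
    {v : V} (hv : v ∈ S) : ev.col t v ≠ Color.red := by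
  intro hred
  obtain ⟨w, hvw, hw⟩ := (ev.red_iff t ht v (by simp)).1 hred
  exact hSred w (ev.mem_of_openConn ht hS hvw hv) hw

end Evolution

namespace StoppedInvasion

variable {G : SimpleGraph V} {c : V → Color} {τ : Sym2 V → ℝ} {x : V} {E : ℕ → Sym2 V}
  {m : ℕ} {R : V} (ev : Evolution (⊤ : G.Subgraph) c τ)

theorem invStep (hinv : StoppedInvasion G c τ x E m R) {k : ℕ} (hk : k < m) :
    InvStep G τ x E k :=
  hinv.2.1 k hk

theorem ne_red_of_mem_treeVerts (hinv : StoppedInvasion G c τ x E m R) (hx : c x ≠ Color.red)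
    {k : ℕ} (hk : k < m) {v : V} (hv : v ∈ treeVerts x E k) : c v ≠ Color.red := by
  induction k generalizing v with
  | zero => exact mem_treeVerts_zero.1 hv ▸ hx
  | succ k ih =>
    rcases mem_treeVerts_succ.1 hv with hv | hvE
    · exact ih (by omega) hv
    by_cases hvW : v ∈ treeVerts x E k
    · exact ih (by omega) hvW
    · obtain ⟨-, -, hstop, -⟩ := hinv
      rw [Ne, hstop k (by omega) v hvE hvW]
      omega

theorem col_ne_red (hinv : StoppedInvasion G c τ x E m R) (hx : c x ≠ Color.red) {k : ℕ}
    (hk : k < m) {t : ℝ} (ht : 0 ≤ t) (htk : t < τ (E k)) {v : V} (hv : v ∈ treeVerts x E k) :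
    ev.col t v ≠ Color.red :=
  ev.col_ne_red_of_forall_lt ht
    (fun _ ha _ hb hab => htk.trans_le ((hinv.invStep hk).le_of_adj ha hb hab))
    (fun _ hw => hinv.ne_red_of_mem_treeVerts hx hk hw) hv

theorem opn_of_le (hinv : StoppedInvasion G c τ x E m R) (hnw : ∀ v, c v ≠ Color.white)
    (hx : c x ≠ Color.red) {k : ℕ} (hk : k < m) {t : ℝ} (ht : 0 ≤ t) (htk : τ (E k) ≤ t) :
    ev.opn t (E k) := by
  obtain ⟨u, hu, huW⟩ := (hinv.invStep hk).exists_mem_treeVerts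
  exact ev.opn_of_forall_green (hinv.invStep hk).mem_edgeSet hu
    (fun s hs hsk => (ev.col_eq_green_iff hnw hs u).2 (hinv.col_ne_red ev hx hk hs hsk huW)) ht htk

theorem col_eq_red (hinv : StoppedInvasion G c τ x E m R) (hnw : ∀ v, c v ≠ Color.white)
    (hx : c x ≠ Color.red) {t : ℝ} (ht : 0 ≤ t) (hτt : ∀ k < m, τ (E k) ≤ t) :
    ev.col t x = Color.red := by
  obtain ⟨hm, -, -, hRE, -, hR⟩ := id hinv
  refine (ev.red_iff t ht x (by simp)).2 ⟨R, ?_, hR⟩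
  refine reflTransGen_of_mem_treeVerts (fun j hj => (hinv.invStep hj).exists_mem_treeVerts)
    (fun j hj a b hab => ⟨?_, hab ▸ hinv.opn_of_le ev hnw hx hj ht (hτt j hj)⟩)
    (mem_treeVerts_of_mem (Nat.sub_lt hm one_pos) hRE)
  exact SimpleGraph.Subgraph.top_adj.2 ((hinv.invStep hj).adj_of_eq hab)

theorem becomesRedAt_max (hinv : StoppedInvasion G c τ x E m R) (hnw : ∀ v, c v ≠ Color.white)
    (hx : c x ≠ Color.red) {N : ℕ} (hN : N < m) (hmax : ∀ k < m, τ (E k) ≤ τ (E N))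
    (hN0 : 0 ≤ τ (E N)) : becomesRedAt ev x (τ (E N)) :=
  ⟨hN0, hinv.col_eq_red ev hnw hx hN0 hmax,
    fun _ hs hsN => hinv.col_ne_red ev hx hN hs hsN (mem_treeVerts_self N)⟩

theorem Cg_subset (hinv : StoppedInvasion G c τ x E m R) (hnw : ∀ v, c v ≠ Color.white)
    (hx : c x ≠ Color.red) {N : ℕ} (hN : N < m) (hmax : ∀ k < m, τ (E k) ≤ τ (E N))
    (hN0 : 0 ≤ τ (E N)) : Cg ev x ⊆ treeVerts x E N := by
  rintro y ⟨t, ht, hxt, hxy⟩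
  have htN : t < τ (E N) := lt_of_not_ge fun hNt => by
    simp [ev.col_eq_red_mono hN0 hNt (hinv.col_eq_red ev hnw hx hN0 hmax)] at hxt
  exact ev.mem_of_openConn ht
    (fun a ha b hb hab => htN.trans_le ((hinv.invStep hN).le_of_adj ha hb hab))
    (Relation.ReflTransGen.mono (fun _ _ (h : _ ∧ _) => ⟨h.1, h.2.1⟩) _ _ hxy)
    (mem_treeVerts_self N)

theorem lt_of_ne (hinv : StoppedInvasion G c τ x E m R)
    (hτinj : ∀ e ∈ G.edgeSet, ∀ f ∈ G.edgeSet, τ e = τ f → e = f) {N : ℕ} (hN : N < m)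
    (hmax : ∀ k < m, τ (E k) ≤ τ (E N)) {k : ℕ} (hk : k < m) (hkN : k ≠ N) :
    τ (E k) < τ (E N) := by
  refine (hmax k hk).lt_of_ne fun h => ?_
  have hE := hτinj _ (hinv.invStep hk).mem_edgeSet _ (hinv.invStep hN).mem_edgeSet h
  rcases hkN.lt_or_gt with hlt | hlt
  · exact (hinv.invStep hN).ne_of_lt hlt hE
  · exact (hinv.invStep hk).ne_of_lt hlt hE.symm

theorem treeVerts_subset_Cg (hinv : StoppedInvasion G c τ x E m R)
    (hnw : ∀ v, c v ≠ Color.white) (hx : c x ≠ Color.red)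
    (hτinj : ∀ e ∈ G.edgeSet, ∀ f ∈ G.edgeSet, τ e = τ f → e = f) {N : ℕ} (hN : N < m)
    (hmax : ∀ k < m, τ (E k) ≤ τ (E N)) (hN0 : 0 < τ (E N)) : treeVerts x E N ⊆ Cg ev x := by
  obtain ⟨T, hT0, hTN, hT⟩ := exists_nonneg_lt_of_forall_lt (fun k => τ (E k)) hN0
    fun k hk => hinv.lt_of_ne hτinj hN hmax (hk.trans hN) hk.ne
  have hgreen : ∀ v ∈ treeVerts x E N, ev.col T v = Color.green := fun v hv =>
    (ev.col_eq_green_iff hnw hT0 v).2 (hinv.col_ne_red ev hx hN hT0 hTN hv)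
  intro y hy
  refine ⟨T, hT0, hgreen x (mem_treeVerts_self N), reflTransGen_of_mem_treeVerts
    (fun j hj => (hinv.invStep (hj.trans hN)).exists_mem_treeVerts) (fun j hj a b hab => ?_) hy⟩
  exact ⟨SimpleGraph.Subgraph.top_adj.2 ((hinv.invStep (hj.trans hN)).adj_of_eq hab),
    hab ▸ hinv.opn_of_le ev hnw hx (hj.trans hN) hT0 (hT j hj),
    hgreen a (mem_treeVerts_of_mem hj (hab ▸ Sym2.mem_mk_left a b)),
    hgreen b (mem_treeVerts_of_mem hj (hab ▸ Sym2.mem_mk_right a b))⟩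

theorem reflTransGen_iff_mem_treeVerts (hinv : StoppedInvasion G c τ x E m R)
    (hτinj : ∀ e ∈ G.edgeSet, ∀ f ∈ G.edgeSet, τ e = τ f → e = f) {N : ℕ} (hN : N < m)
    (hmax : ∀ k < m, τ (E k) ≤ τ (E N)) {y : V} :
    Relation.ReflTransGen (fun a b => ∃ k < m, k ≠ N ∧ E k = s(a, b)) x y ↔
      y ∈ treeVerts x E N := by
  refine ⟨fun h => h.mem_of_closed (fun a b ⟨k, hk, hkN, hab⟩ ha => ?_) (mem_treeVerts_self N),
    reflTransGen_of_mem_treeVerts (fun j hj => (hinv.invStep (hj.trans hN)).exists_mem_treeVerts)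
      fun j hj a b hab => ⟨j, hj.trans hN, hj.ne, hab⟩⟩
  rcases hkN.lt_or_gt with hlt | hlt
  · exact mem_treeVerts_of_mem hlt (hab ▸ Sym2.mem_mk_right a b)
  · by_contra hb
    have hle := (hinv.invStep hN).le_of_adj ha hb ((hinv.invStep hk).adj_of_eq hab)
    exact (hab ▸ hle).not_gt (hinv.lt_of_ne hτinj hN hmax hk hkN)

end StoppedInvasion

theorem statement8_general
    {V : Type*} (G : SimpleGraph V)
    (c : V → Color) (hnw : ∀ v, c v ≠ Color.white)
    (τ : Sym2 V → ℝ) (hτpos : ∀ e ∈ G.edgeSet, 0 < τ e)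
    (hτinj : ∀ e ∈ G.edgeSet, ∀ f ∈ G.edgeSet, τ e = τ f → e = f)
    (x : V) (hx : c x = Color.green)
    (E : ℕ → Sym2 V) (m : ℕ) (R : V) (hinv : StoppedInvasion G c τ x E m R)
    (ev : Evolution (⊤ : G.Subgraph) c τ)
    (N : ℕ) (hN : N < m) (hmax : ∀ k < m, τ (E k) ≤ τ (E N)) :
    becomesRedAt ev x (τ (E N)) ∧
      Cg ev x = {y | Relation.ReflTransGen
        (fun a b => ∃ k < m, k ≠ N ∧ E k = s(a, b)) x y} := by
  have hx' : c x ≠ Color.red := by simp [hx]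
  have hN0 : 0 < τ (E N) := hτpos _ (hinv.invStep hN).mem_edgeSet
  refine ⟨hinv.becomesRedAt_max ev hnw hx' hN hmax hN0.le, ?_⟩
  have hT₁ : {y | Relation.ReflTransGen (fun a b => ∃ k < m, k ≠ N ∧ E k = s(a, b)) x y} =
      treeVerts x E N :=
    Set.ext fun _ => hinv.reflTransGen_iff_mem_treeVerts hτinj hN hmax
  rw [hT₁]
  exact (hinv.Cg_subset ev hnw hx' hN hmax hN0.le).antisymm
    (hinv.treeVerts_subset_Cg ev hnw hx' hτinj hN hmax hN0)

/-- In the finite growth model with no white vertices, an initially green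
vertex `x` becomes red exactly at time `τ*`, the maximal `τ`-value of an edge of the stopped
invasion tree `T(x)`, and `C_g(x)` equals the vertex set of the component `T₁*(x)` of `x` in
`T(x)` with the maximal edge `e*` removed. -/
theorem statement8
    {V : Type*} [Fintype V] (G : SimpleGraph V) (hconn : G.Connected)
    (c : V → Color) (hnw : ∀ v, c v ≠ Color.white)
    (hg : ∃ v, c v = Color.green) (hr : ∃ v, c v = Color.red)
    (τ : Sym2 V → ℝ) (hτpos : ∀ e ∈ G.edgeSet, 0 < τ e)
    (hτinj : ∀ e ∈ G.edgeSet, ∀ f ∈ G.edgeSet, τ e = τ f → e = f)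
    (x : V) (hx : c x = Color.green)
    (E : ℕ → Sym2 V) (m : ℕ) (R : V) (hinv : StoppedInvasion G c τ x E m R)
    (ev : Evolution (⊤ : G.Subgraph) c τ)
    (N : ℕ) (hN : N < m) (hmax : ∀ k < m, τ (E k) ≤ τ (E N)) :
    becomesRedAt ev x (τ (E N)) ∧
      Cg ev x = {y | Relation.ReflTransGen
        (fun a b => ∃ k < m, k ≠ N ∧ E k = s(a, b)) x y} :=
  statement8_general G c hnw τ hτpos hτinj x hx E m R hinv ev N hN hmax

end RandomSpatialGrowth
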